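/- Let n ≥ 5 be odd (so n ≡ 1 or 3 mod 4) and let A_n² be the square of the n×n upper-shift matrix. Then the Lie algebra sol_{A_n²} = {X ∈ M_n(ℂ) | Xᵀ A_n² + A_n² X = 0}, viewed as a Lie subalgebra of gl_n(ℂ) with bracket [X,Y] = XY − YX, is solvable. -/

import Mathlib

open Matrix

attribute [local instance 100] LieRing.ofAssociativeRing

/-- The `n × n` nilpotent upper-shift matrix `A_n`. -/
def shiftMat (n : ℕ) : Matrix (Fin n) (Fin n) ℂ :=
  Matrix.of fun i j => if (j : ℕ) = (i : ℕ) + 1 then 1 else 0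

/-- The Lie algebra `sol_A = {X | Xᵀ A + A X = 0}`, viewed as a Lie subalgebra of the
matrix Lie algebra `gl_n(ℂ)` with bracket `[X, Y] = XY - YX`. -/
def solAlg (n : ℕ) (A : Matrix (Fin n) (Fin n) ℂ) :
    LieSubalgebra ℂ (Matrix (Fin n) (Fin n) ℂ) where
  carrier := {X | Xᵀ * A + A * X = 0}
  add_mem' := by
    intro a b ha hb
    simp only [Set.mem_setOf_eq] at ha hb ⊢
    have key : (a + b)ᵀ * A + A * (a + b) = (aᵀ * A + A * a) + (bᵀ * A + A * b) := by
      rw [Matrix.transpose_add]; noncomm_ring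
    rw [key, ha, hb, add_zero]
  zero_mem' := by simp
  smul_mem' := by
    intro c x hx
    simp only [Set.mem_setOf_eq] at hx ⊢
    rw [Matrix.transpose_smul, Matrix.smul_mul, Matrix.mul_smul, ← smul_add, hx, smul_zero]
  lie_mem' := by
    intro x y hx hy
    simp only [Set.mem_setOf_eq] at hx hy ⊢
    rw [Ring.lie_def]
    have key : (x * y - y * x)ᵀ * A + A * (x * y - y * x) =
        yᵀ * (xᵀ * A + A * x) + (xᵀ * A + A * x) * y -
          xᵀ * (yᵀ * A + A * y) - (yᵀ * A + A * y) * x := by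
      rw [Matrix.transpose_sub, Matrix.transpose_mul, Matrix.transpose_mul]; noncomm_ring
    rw [key, hx, hy]
    simp

/-!
Entrywise, `Xᵀ A_n² + A_n² X = 0` says `X a b = -X (b - 2) (a - 2)`, where positions outside
`[0, n)²` read as `0`. Group the indices into blocks `{2k, 2k + 1}`. The move
`(a, b) ↦ (b - 2, a - 2)` lowers both blocks by one and swaps them, so iterating it from `(a, b)`
reaches the first two columns (where the relation says the entry is zero) exactly when the
smaller of the two blocks is even and is the column block, or odd and is the row block.
Entries inside one block are handled by the symmetry `X ↦ J X J` of the equation (`J` the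
reversal permutation): as `n` is odd, `J` sends the two members of a block into two adjacent
blocks. Altogether every `X` is triangular for one fixed order of the indices: even blocks
ascending, then odd blocks descending, the two members of a block ordered according to the
parities of the block and of `n / 2`.

A Lie algebra of matrices triangular for a fixed order is solvable: its `k`-th derived term
consists of matrices vanishing on all entries fewer than `k` steps above the diagonal.
-/

namespace Matrix

variable {ι : Type*} (R : Type*) [CommRing R]

def gapTriangular (W : ι → ℕ) (d : ℕ) : Submodule R (Matrix ι ι R) where
  carrier := {M | ∀ i j, W j < W i + d → M i j = 0}
  add_mem' hM hN i j h := by simp [hM i j h, hN i j h]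
  zero_mem' _ _ _ := rfl
  smul_mem' c M hM i j h := by simp [hM i j h]

variable {R} {W : ι → ℕ} {d e : ℕ} {M N : Matrix ι ι R}

theorem mem_gapTriangular_zero : M ∈ gapTriangular R W 0 ↔ M.BlockTriangular W :=
  Iff.rfl

theorem gapTriangular_antitone : Antitone (gapTriangular R W) :=
  fun _ _ hde _ hM i j h => hM i j (by omega)

theorem eq_zero_of_mem_gapTriangular (hM : M ∈ gapTriangular R W d) (hd : ∀ i, W i < d) :
    M = 0 :=
  ext fun i j => hM i j (by have := hd j; omega)

variable [Fintype ι]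

theorem mul_mem_gapTriangular (hM : M ∈ gapTriangular R W d) (hN : N ∈ gapTriangular R W e) :
    M * N ∈ gapTriangular R W (d + e) := by
  intro i j h
  refine Finset.sum_eq_zero fun k _ => ?_
  change M i k * N k j = 0
  by_cases hk : W k < W i + d
  · rw [hM i k hk, zero_mul]
  · rw [hN k j (by omega), mul_zero]

theorem BlockTriangular.mul_apply_of_le [DecidableEq ι] (hW : Function.Injective W)
    (hM : M.BlockTriangular W) (hN : N.BlockTriangular W) {i j : ι} (hij : W j ≤ W i) :
    (M * N) i j = M i j * N j j := by
  refine Fintype.sum_eq_single j fun k hk => ?_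
  change M i k * N k j = 0
  by_cases hki : W k < W i
  · rw [hM hki, zero_mul]
  · rw [hN (lt_of_le_of_ne (by omega) (hW.ne hk).symm), mul_zero]

theorem commutator_mem_gapTriangular_succ [DecidableEq ι] (hW : Function.Injective W)
    (hM : M ∈ gapTriangular R W d) (hN : N ∈ gapTriangular R W d) :
    M * N - N * M ∈ gapTriangular R W (d + 1) := by
  rcases Nat.eq_zero_or_pos d with rfl | hd
  · rw [mem_gapTriangular_zero] at hM hN
    intro i j hij
    rw [sub_apply, BlockTriangular.mul_apply_of_le hW hM hN (by omega),
      BlockTriangular.mul_apply_of_le hW hN hM (by omega)]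
    rcases eq_or_ne i j with rfl | hne
    · ring
    · have hlt : W j < W i := lt_of_le_of_ne (by omega) (hW.ne hne.symm)
      rw [hM hlt, hN hlt, zero_mul, zero_mul, sub_zero]
  · exact gapTriangular_antitone (by omega)
      (sub_mem (mul_mem_gapTriangular hM hN) (mul_mem_gapTriangular hN hM))

end Matrix

namespace LieSubalgebra

open Matrix

variable {ι R : Type*} [Fintype ι] [DecidableEq ι] [CommRing R]

theorem coe_derivedSeries_mem_gapTriangular {L : LieSubalgebra R (Matrix ι ι R)} {W : ι → ℕ}
    (hW : Function.Injective W) (hL : ∀ X ∈ L, X.BlockTriangular W) (k : ℕ) :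
    ∀ x ∈ LieAlgebra.derivedSeries R L k, (x : Matrix ι ι R) ∈ gapTriangular R W k := by
  induction k with
  | zero => exact fun x _ => hL x x.2
  | succ k ih =>
    intro x hx
    rw [LieAlgebra.derivedSeries_def, LieAlgebra.derivedSeriesOfIdeal_succ,
      ← LieAlgebra.derivedSeries_def, ← LieSubmodule.mem_toSubmodule,
      LieSubmodule.lieIdeal_oper_eq_linear_span'] at hx
    refine (Submodule.span_le (p := (gapTriangular R W (k + 1)).comap
      (L.incl : L →ₗ⁅R⁆ Matrix ι ι R).toLinearMap)).mpr ?_ hx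
    rintro _ ⟨y, hy, z, hz, rfl⟩
    exact commutator_mem_gapTriangular_succ hW (ih y hy) (ih z hz)

theorem isSolvable_of_blockTriangular (L : LieSubalgebra R (Matrix ι ι R)) (W : ι → ℕ)
    (hW : Function.Injective W) (hL : ∀ X ∈ L, X.BlockTriangular W) :
    LieAlgebra.IsSolvable L := by
  obtain ⟨d, hd⟩ : ∃ d, ∀ i, W i < d :=
    ⟨Finset.univ.sup W + 1, fun i => Nat.lt_succ_of_le (Finset.le_sup (Finset.mem_univ i))⟩
  refine LieAlgebra.IsSolvable.mk (R := R) (k := d) ((LieSubmodule.eq_bot_iff _).mpr ?_)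
  exact fun x hx => Subtype.ext (eq_zero_of_mem_gapTriangular
    (coe_derivedSeries_mem_gapTriangular hW hL d x hx) hd)

end LieSubalgebra

namespace Matrix

variable {n : ℕ}

def zeroExtend {α : Type*} [Zero α] (X : Matrix (Fin n) (Fin n) α) (a b : ℤ) : α :=
  if h : 0 ≤ a ∧ a < n ∧ 0 ≤ b ∧ b < n then X ⟨a.toNat, by omega⟩ ⟨b.toNat, by omega⟩ else 0

variable {R : Type*} [AddCommMonoid R] {X : Matrix (Fin n) (Fin n) R}

theorem zeroExtend_coe (X : Matrix (Fin n) (Fin n) R) (i j : Fin n) :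
    X.zeroExtend i j = X i j := by
  simp [zeroExtend]

theorem zeroExtend_eq_zero {a b : ℤ} (h : ¬(0 ≤ a ∧ a < n ∧ 0 ≤ b ∧ b < n)) :
    X.zeroExtend a b = 0 :=
  dif_neg h

theorem sum_ite_eq_zeroExtend (X : Matrix (Fin n) (Fin n) R) (c : ℤ) (j : Fin n) :
    ∑ k : Fin n, (if (k : ℤ) = c then X k j else 0) = X.zeroExtend c j := by
  by_cases hc : 0 ≤ c ∧ c < n
  · rw [Fintype.sum_eq_single ⟨c.toNat, by omega⟩
      fun k hk => if_neg fun h => hk (by ext; simp; omega)]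
    simp [zeroExtend, hc]
  · rw [zeroExtend_eq_zero (by omega)]
    exact Finset.sum_eq_zero fun k _ => if_neg (by omega)

end Matrix

open Matrix

theorem shiftMat_sq_apply (n : ℕ) (i j : Fin n) :
    (shiftMat n ^ 2) i j = if (j : ℤ) = i + 2 then 1 else 0 := by
  rw [sq, mul_apply]
  by_cases hij : (j : ℤ) = i + 2
  · rw [if_pos hij, Fintype.sum_eq_single ⟨i + 1, by omega⟩]
    · simp [shiftMat]; omega
    · intro k hk
      simp only [shiftMat, of_apply]
      rw [if_neg fun h => hk (Fin.ext h), zero_mul]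
  · rw [if_neg hij]
    refine Finset.sum_eq_zero fun k _ => ?_
    simp only [shiftMat, of_apply]
    split_ifs <;> first | omega | simp

theorem shiftMat_sq_mul_apply {n : ℕ} (X : Matrix (Fin n) (Fin n) ℂ) (i j : Fin n) :
    (shiftMat n ^ 2 * X) i j = X.zeroExtend (i + 2) j := by
  simp only [mul_apply, shiftMat_sq_apply, ite_mul, one_mul, zero_mul, sum_ite_eq_zeroExtend]

theorem transpose_mul_shiftMat_sq_apply {n : ℕ} (X : Matrix (Fin n) (Fin n) ℂ) (i j : Fin n) :
    (Xᵀ * shiftMat n ^ 2) i j = X.zeroExtend (j - 2) i := by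
  rw [← sum_ite_eq_zeroExtend]
  simp only [mul_apply, shiftMat_sq_apply, transpose_apply, mul_ite, mul_one, mul_zero]
  exact Fintype.sum_congr _ _ fun k => if_congr (by omega) rfl rfl

theorem transpose_shiftMat_sq_submatrix_rev (n : ℕ) :
    (shiftMat n ^ 2)ᵀ.submatrix (Fin.revPerm (n := n)) Fin.revPerm = shiftMat n ^ 2 := by
  have h : (shiftMat n)ᵀ.submatrix (Fin.revPerm (n := n)) Fin.revPerm = shiftMat n := by
    ext i j
    simp only [shiftMat, submatrix_apply, transpose_apply, of_apply, Fin.revPerm_apply,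
      Fin.val_rev]
    congr 1
    simp only [eq_iff_iff]
    omega
  rw [transpose_pow, sq, sq, ← submatrix_mul_equiv _ _ _ (Fin.revPerm (n := n)), h]

theorem submatrix_mem_solAlg {n : ℕ} {A X : Matrix (Fin n) (Fin n) ℂ} (e : Fin n ≃ Fin n)
    (hA : Aᵀ.submatrix e e = A) (hX : X ∈ solAlg n A) : X.submatrix e e ∈ solAlg n A := by
  have hX' : Xᵀ * A + A * X = 0 := hX
  have hsum : Xᵀ * Aᵀ + Aᵀ * X = (Xᵀ * A + A * X)ᵀ := by
    rw [transpose_add, transpose_mul, transpose_mul, transpose_transpose, add_comm]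
  show (X.submatrix e e)ᵀ * A + A * X.submatrix e e = 0
  rw [← hA, transpose_submatrix, submatrix_mul_equiv, submatrix_mul_equiv]
  change (Xᵀ * Aᵀ + Aᵀ * X).submatrix e e = 0
  rw [hsum, hX', transpose_zero, submatrix_zero, Pi.zero_apply, Pi.zero_apply]

theorem zeroExtend_eq_neg_of_mem_solAlg {n : ℕ} {X : Matrix (Fin n) (Fin n) ℂ}
    (hX : X ∈ solAlg n (shiftMat n ^ 2)) {a b : ℤ} (ha : 2 ≤ a) (hb : 0 ≤ b) (hbn : b < n) :
    X.zeroExtend a b = -X.zeroExtend (b - 2) (a - 2) := by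
  by_cases han : a - 2 < n
  · have h := congrFun₂ (show Xᵀ * shiftMat n ^ 2 + shiftMat n ^ 2 * X = 0 from hX)
      ⟨(a - 2).toNat, by omega⟩ ⟨b.toNat, by omega⟩
    rw [Matrix.add_apply, transpose_mul_shiftMat_sq_apply, shiftMat_sq_mul_apply,
      Matrix.zero_apply] at h
    simp only [Int.toNat_of_nonneg hb, Int.toNat_of_nonneg (by omega : 0 ≤ a - 2),
      sub_add_cancel] at h
    linear_combination h
  · rw [zeroExtend_eq_zero (by omega), zeroExtend_eq_zero (by omega), neg_zero]

def ForcedZero (a b : ℤ) : Prop :=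
  b / 2 < a / 2 ∧ b / 2 % 2 = 0 ∨ a / 2 < b / 2 ∧ a / 2 % 2 = 1

theorem zeroExtend_eq_zero_of_forcedZero {n : ℕ} {X : Matrix (Fin n) (Fin n) ℂ}
    (hX : X ∈ solAlg n (shiftMat n ^ 2)) {a b : ℤ} (hab : ForcedZero a b) :
    X.zeroExtend a b = 0 := by
  suffices ∀ k : ℕ, ∀ a b : ℤ, a + b < k → ForcedZero a b → X.zeroExtend a b = 0 from
    this (a + b).toNat.succ a b (by omega) hab
  intro k
  induction k with
  | zero => exact fun a b hk _ => zeroExtend_eq_zero (by omega)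
  | succ k ih =>
    intro a b hk hab
    unfold ForcedZero at hab
    by_cases hin : 0 ≤ a ∧ a < n ∧ 0 ≤ b ∧ b < n
    · rw [zeroExtend_eq_neg_of_mem_solAlg hX (by omega) (by omega) (by omega),
        ih _ _ (by omega) (by unfold ForcedZero; omega), neg_zero]
    · exact zeroExtend_eq_zero hin

def blockRank (n k : ℕ) : ℕ :=
  if k % 2 = 0 then k else 2 * n - k

def triangularizingWeight (n a : ℕ) : ℕ :=
  2 * blockRank n (a / 2) + if a / 2 % 2 = n / 2 % 2 then a % 2 else 1 - a % 2

theorem triangularizingWeight_injOn (n : ℕ) :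
    Set.InjOn (triangularizingWeight n) (Set.Iio n) := by
  intro a ha b hb h
  simp only [Set.mem_Iio] at ha hb
  unfold triangularizingWeight blockRank at h
  split_ifs at h <;> omega

theorem forcedZero_of_triangularizingWeight_lt {n a b : ℕ} (ha : a < n) (hb : b < n)
    (hab : a / 2 ≠ b / 2) (h : triangularizingWeight n b < triangularizingWeight n a) :
    ForcedZero a b := by
  unfold triangularizingWeight blockRank at h
  unfold ForcedZero
  split_ifs at h <;> omega

theorem forcedZero_rev_of_triangularizingWeight_lt {n a b : ℕ} (hn : Odd n)
    (hab : a / 2 = b / 2) (h : triangularizingWeight n b < triangularizingWeight n a) :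
    ForcedZero (n - 1 - a) (n - 1 - b) := by
  rw [Nat.odd_iff] at hn
  unfold triangularizingWeight at h
  rw [hab] at h
  unfold ForcedZero
  split_ifs at h <;> omega

theorem blockTriangular_of_mem_solAlg {n : ℕ} (hn : Odd n) {X : Matrix (Fin n) (Fin n) ℂ}
    (hX : X ∈ solAlg n (shiftMat n ^ 2)) :
    X.BlockTriangular fun i => triangularizingWeight n i := by
  intro i j hij
  rcases eq_or_ne ((i : ℕ) / 2) ((j : ℕ) / 2) with hsame | hdiff
  · have hY := submatrix_mem_solAlg _ (transpose_shiftMat_sq_submatrix_rev n) hX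
    have hrev (k : Fin n) : ((k.rev : ℕ) : ℤ) = n - 1 - k := by rw [Fin.val_rev]; omega
    calc X i j = (X.submatrix Fin.revPerm Fin.revPerm).zeroExtend i.rev j.rev := by
          rw [zeroExtend_coe, submatrix_apply, Fin.revPerm_apply, Fin.revPerm_apply,
            Fin.rev_rev, Fin.rev_rev]
      _ = 0 := by
          rw [hrev, hrev]
          exact zeroExtend_eq_zero_of_forcedZero hY
            (forcedZero_rev_of_triangularizingWeight_lt hn hsame hij)
  · rw [← zeroExtend_coe X i j]
    exact zeroExtend_eq_zero_of_forcedZero hX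
      (forcedZero_of_triangularizingWeight_lt i.2 j.2 hdiff hij)

theorem stmt_17 (n : ℕ) (hodd : Odd n) :
    LieAlgebra.IsSolvable ↥(solAlg n (shiftMat n ^ 2)) :=
  LieSubalgebra.isSolvable_of_blockTriangular _ (fun i : Fin n => triangularizingWeight n i)
    (fun i j h => Fin.ext (triangularizingWeight_injOn n i.2 j.2 h))
    fun _ hX => blockTriangular_of_mem_solAlg hodd hX
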